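/- Let G_1,…,G_n be connected graphs with λ_1,…,λ_n vertices respectively, let H be any connected graph with vertex set {v_1,…,v_n}, and let G be the graph obtained by joining each vertex v_i of H by an edge to an arbitrarily chosen vertex u_i of G_i. If G has a connected partition of type μ, then the complete sun graph S̄(n; λ_1,…,λ_n) also has a connected partition of type μ. -/

import Mathlib

noncomputable section

open SimpleGraph

/-- The chromatic symmetric function of a finite simple graph, as a formal power
series in countably many commuting variables `x_0, x_1, x_2, …`: the coefficient of the
monomial `∏ i, x_i ^ d i` is the number of proper colourings `κ : V → ℕ` in which colour `i`
is used exactly `d i` times. -/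
def csf {V : Type} [Fintype V] (G : SimpleGraph V) : MvPowerSeries ℕ ℚ :=
  fun d => (Nat.card {κ : V → ℕ //
      (∀ u v : V, G.Adj u v → κ u ≠ κ v) ∧
      ∀ i : ℕ, Nat.card {v : V // κ v = i} = d i} : ℚ)

/-- The elementary symmetric function `e_k` as a formal power series. -/
def esym (k : ℕ) : MvPowerSeries ℕ ℚ :=
  fun d => if (∀ i ∈ d.support, d i = 1) ∧ (d.sum fun _ v => v) = k then 1 else 0

/-- `e_λ` for a partition `λ` given as a multiset of parts. -/
def esymM (μ : Multiset ℕ) : MvPowerSeries ℕ ℚ :=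
  (μ.map esym).prod

/-- A symmetric function is `e`-positive if it is a finite nonnegative linear combination
of the elementary symmetric functions `e_λ`, `λ` a partition (all parts positive). -/
def EPositive (f : MvPowerSeries ℕ ℚ) : Prop :=
  ∃ c : Multiset ℕ →₀ ℚ, (∀ μ, 0 ≤ c μ) ∧ (∀ μ ∈ c.support, 0 ∉ μ) ∧
    f = c.sum fun μ a => a • esymM μ

/-- The path `P_k` on `k` vertices. -/
def pathG (k : ℕ) : SimpleGraph (Fin k) :=
  SimpleGraph.fromRel (fun i j => (j : ℕ) = (i : ℕ) + 1)

/-- The cycle `C_m` on `m` vertices (for `m = 2` this is a single edge, i.e. `P_2`). -/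
def cycleG (m : ℕ) : SimpleGraph (Fin m) :=
  SimpleGraph.fromRel (fun i j => (j : ℕ) = ((i : ℕ) + 1) % m)

/-- Auxiliary relation for sun graphs: body relation on `Fin n`, plus rays
`P_{lam i}` attached at vertex `i`, the leaf `⟨i,0⟩` of ray `i` being joined to `i`. -/
def sunRel (n : ℕ) (lam : Fin n → ℕ) (body : Fin n → Fin n → Prop) :
    (Fin n ⊕ ((i : Fin n) × Fin (lam i))) → (Fin n ⊕ ((i : Fin n) × Fin (lam i))) → Prop
  | Sum.inl i, Sum.inl i' => body i i'
  | Sum.inl i, Sum.inr p => p.1 = i ∧ (p.2 : ℕ) = 0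
  | Sum.inr p, Sum.inr q => p.1 = q.1 ∧ (q.2 : ℕ) = (p.2 : ℕ) + 1
  | _, _ => False

/-- The sun graph `S(n; λ_1, …, λ_n)`: a cycle `C_n` with a path `P_{λ_i}` (a *ray*)
joined by an edge to the `i`-th cycle vertex, for each `i`. -/
def sunGraph (n : ℕ) (lam : Fin n → ℕ) :
    SimpleGraph (Fin n ⊕ ((i : Fin n) × Fin (lam i))) :=
  SimpleGraph.fromRel (sunRel n lam (fun i i' => (i' : ℕ) = ((i : ℕ) + 1) % n))

/-- The complete sun graph `S̄(n; λ_1, …, λ_n)`: as `sunGraph`, but with complete body `K_n`. -/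
def completeSunGraph (n : ℕ) (lam : Fin n → ℕ) :
    SimpleGraph (Fin n ⊕ ((i : Fin n) × Fin (lam i))) :=
  SimpleGraph.fromRel (sunRel n lam (fun i i' => i ≠ i'))

/-- The spider `S(μ_1, …, μ_d)`: `d` paths (legs) `P_{μ_i}`, each joined at a leaf to a
common centre vertex. -/
def spiderGraph (d : ℕ) (mu : Fin d → ℕ) :
    SimpleGraph (Unit ⊕ ((i : Fin d) × Fin (mu i))) :=
  SimpleGraph.fromRel (fun a b => match a, b with
    | Sum.inl _, Sum.inr p => (p.2 : ℕ) = 0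
    | Sum.inr p, Sum.inr q => p.1 = q.1 ∧ (q.2 : ℕ) = (p.2 : ℕ) + 1
    | _, _ => False)

/-- The graph obtained from a body graph `H` on `Fin n` by joining each body vertex `i`
by an edge to a chosen vertex `u i` of a graph `Gs i`. -/
def attachGraph {n : ℕ} {Vs : Fin n → Type} (H : SimpleGraph (Fin n))
    (Gs : ∀ i, SimpleGraph (Vs i)) (u : ∀ i, Vs i) :
    SimpleGraph (Fin n ⊕ ((i : Fin n) × Vs i)) :=
  SimpleGraph.fromRel (fun a b => match a, b with
    | Sum.inl i, Sum.inl i' => H.Adj i i'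
    | Sum.inl i, Sum.inr p => p.1 = i ∧ p.2 = u p.1
    | Sum.inr p, Sum.inr q => ∃ h : p.1 = q.1, (Gs q.1).Adj (h ▸ p.2) q.2
    | _, _ => False)

/-- `G` has a connected partition of type `μ`: a partition of the vertex set all of whose
blocks induce connected subgraphs, the multiset of block sizes being `μ`. -/
def HasConnectedPartition {V : Type} [Fintype V] [DecidableEq V]
    (G : SimpleGraph V) (μ : Multiset ℕ) : Prop :=
  ∃ P : Finpartition (Finset.univ : Finset V),
    (∀ p ∈ P.parts, (G.induce (↑p : Set V)).Connected) ∧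
      P.parts.val.map Finset.card = μ

/-- `G` has a perfect matching: a partition of `V(G)` into pairs of adjacent vertices. -/
def HasPerfectMatching {V : Type} (G : SimpleGraph V) : Prop :=
  ∃ M : G.Subgraph, M.IsPerfectMatching

/-- `G` has an almost perfect matching: a partition of `V(G)` into pairs of adjacent
vertices together with one singleton. -/
def HasAlmostPerfectMatching {V : Type} (G : SimpleGraph V) : Prop :=
  ∃ M : G.Subgraph, M.IsMatching ∧ ∃ v : V, M.verts = {v}ᶜ

/-- The tadpole graph `T_{m,l}`: the cycle `C_m` (vertices `0, …, m-1`, consecutive edges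
plus the chord `{0, m-1}`) with a path on `l` further vertices attached by an edge at
vertex `m-1`.  For `l = 0` this is just `C_m`. -/
def tadpole (m l : ℕ) : SimpleGraph (Fin (m + l)) :=
  SimpleGraph.fromRel (fun i j =>
    (j : ℕ) = (i : ℕ) + 1 ∨ ((i : ℕ) = 0 ∧ (j : ℕ) = m - 1))

/-- Dumbbell with path-parameter `t = l + 1 ≥ 0`: vertices `0, …, m-1` form the cycle `C_m`
(consecutive edges plus chord `{0, m-1}`), vertices `m+t-1, …, m+n+t-2` form the cycle `C_n`
(consecutive edges plus chord `{m+t-1, m+n+t-2}`), and the vertices in between form the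
connecting path; for `t = 0` (i.e. `l = -1`) the two cycles share the vertex `m-1`. -/
def dumbbellAux (m n t : ℕ) : SimpleGraph (Fin (m + n + t - 1)) :=
  SimpleGraph.fromRel (fun i j =>
    (j : ℕ) = (i : ℕ) + 1
      ∨ ((i : ℕ) = 0 ∧ (j : ℕ) = m - 1)
      ∨ ((i : ℕ) = m + t - 1 ∧ (j : ℕ) = m + n + t - 2))

/-- The dumbbell graph `D(m, l, n)` for `l ≥ -1`: cycles `C_m` and `C_n` joined by a path
on `l` vertices (for `l = 1` a single joining vertex, for `l = 0` a joining edge, and for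
`l = -1` the two cycles share a vertex). -/
def dumbbell (m n : ℕ) (l : ℤ) : SimpleGraph (Fin (m + n + (l + 1).toNat - 1)) :=
  dumbbellAux m n (l + 1).toNat

end

/-!
Relabel each `G_i` as the ray `P_{λ_i}` by listing its vertices block by block, the block of the
attachment vertex `u_i` first. Since a block can leave `G_i` only through the edge `u_i v_i`, a
block meeting the body meets each `G_i` in the block of `u_i`, which becomes an initial segment of
the ray, joined to the complete body `K_n`; a block missing the body lies inside one `G_i` and
becomes an interval of its ray. Either way the relabelled block is connected in `S̄(n; λ)`.
-/

open SimpleGraph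

section OrderedFibers

variable {α β : Type*} [Fintype α] {m : ℕ}

theorem exists_equiv_fin_monotone [LinearOrder β] (g : α → β) (hm : Fintype.card α = m) :
    ∃ e : α ≃ Fin m, Monotone (g ∘ e.symm) := by
  let e₀ := Fintype.equivFinOfCardEq hm
  exact ⟨e₀.trans (Tuple.sort (g ∘ e₀.symm)).symm, Tuple.monotone_sort (g ∘ e₀.symm)⟩

theorem exists_nat_rank_eq_iff (f : α → β) (a₀ : α) :
    ∃ g : α → ℕ, (∀ x y, g x = g y ↔ f x = f y) ∧ g a₀ = 0 := by
  classical
  have : Nonempty α := ⟨a₀⟩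
  let e₀ := Fintype.equivFin α
  refine ⟨fun x => if f x = f a₀ then 0 else e₀ (Function.invFun f (f x)) + 1,
    fun x y => ⟨fun hxy => ?_, fun hxy => by simp only [hxy]⟩, by simp⟩
  dsimp only at hxy
  split_ifs at hxy with hx hy hy
  · exact hx.trans hy.symm
  · have hinv := e₀.injective (Fin.ext (Nat.succ_injective hxy))
    rw [← Function.invFun_eq (⟨x, rfl⟩ : ∃ a, f a = f x),
      ← Function.invFun_eq (⟨y, rfl⟩ : ∃ a, f a = f y), hinv]

theorem exists_equiv_fin_ordConnected_fibers (f : α → β) (a₀ : α) (hm : Fintype.card α = m) :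
    ∃ e : α ≃ Fin m, (∀ b, ((f ∘ e.symm) ⁻¹' {b}).OrdConnected) ∧
      IsLowerSet ((f ∘ e.symm) ⁻¹' {f a₀}) := by
  obtain ⟨g, hg, hga₀⟩ := exists_nat_rank_eq_iff f a₀
  obtain ⟨e, he⟩ := exists_equiv_fin_monotone g hm
  refine ⟨e, fun b => ⟨fun x hx y hy z hz => ?_⟩, fun x y hyx hx => ?_⟩
  · have hxy : g (e.symm x) = g (e.symm y) := (hg _ _).2 (hx.trans hy.symm)
    have hxz : g (e.symm z) = g (e.symm x) :=
      le_antisymm (hxy ▸ he hz.2) (he hz.1)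
    exact ((hg _ _).1 hxz).trans hx
  · have hx' : g (e.symm x) = 0 := hga₀ ▸ (hg _ _).2 hx
    have hy' : g (e.symm y) = 0 := Nat.le_zero.1 ((he hyx).trans hx'.le)
    exact (hg _ _).1 (hy'.trans hga₀.symm)

end OrderedFibers

theorem hasConnectedPartition_of_equiv {V W : Type} [Fintype V] [DecidableEq V] [Fintype W]
    [DecidableEq W] {G : SimpleGraph W} (Φ : V ≃ W) (P : Finpartition (Finset.univ : Finset V))
    (hP : ∀ p ∈ P.parts, (G.induce (p.map Φ.toEmbedding : Set W)).Connected) :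
    HasConnectedPartition G (P.parts.val.map Finset.card) := by
  let Ψ : Finset V ≃o Finset W := Φ.finsetCongr.toOrderIso
    (fun _ _ => Finset.map_subset_map.2) (fun _ _ => Finset.map_subset_map.2)
  have hΨ : ∀ p, Ψ p = p.map Φ.toEmbedding := fun _ => rfl
  refine ⟨(P.map Ψ).copy (by simp [hΨ]), ?_, ?_⟩
  · simp only [Finpartition.copy, Finpartition.parts_map, Finset.forall_mem_map]
    exact hP
  · simp [Finpartition.copy, hΨ]

section CompleteSun

variable {n : ℕ} {lam : Fin n → ℕ}

theorem completeSunGraph_adj_inl_inl {i j : Fin n} (h : i ≠ j) :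
    (completeSunGraph n lam).Adj (.inl i) (.inl j) := by
  simp [completeSunGraph, sunRel, h]

theorem completeSunGraph_adj_inl_inr {i : Fin n} {c : Fin (lam i)} (hc : (c : ℕ) = 0) :
    (completeSunGraph n lam).Adj (.inl i) (.inr ⟨i, c⟩) := by
  simp [completeSunGraph, sunRel, hc]

theorem completeSunGraph_adj_inr_inr {i : Fin n} {b c : Fin (lam i)} (h : (c : ℕ) = b + 1) :
    (completeSunGraph n lam).Adj (.inr ⟨i, b⟩) (.inr ⟨i, c⟩) := by
  simp [completeSunGraph, sunRel, h, Fin.ext_iff]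

variable {S : Set (Fin n ⊕ (i : Fin n) × Fin (lam i))}

theorem completeSunGraph_induce_reachable_inl {i j : Fin n} (hi : .inl i ∈ S)
    (hj : .inl j ∈ S) :
    ((completeSunGraph n lam).induce S).Reachable ⟨.inl i, hi⟩ ⟨.inl j, hj⟩ := by
  obtain rfl | hij := eq_or_ne i j
  · rfl
  · exact Adj.reachable (completeSunGraph_adj_inl_inl hij)

theorem completeSunGraph_induce_reachable_ray {i : Fin n} {b c : Fin (lam i)} (hbc : b ≤ c)
    (hS : ∀ d ∈ Set.Icc b c, .inr ⟨i, d⟩ ∈ S) :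
    ((completeSunGraph n lam).induce S).Reachable ⟨.inr ⟨i, b⟩, hS b ⟨le_rfl, hbc⟩⟩
      ⟨.inr ⟨i, c⟩, hS c ⟨hbc, le_rfl⟩⟩ := by
  obtain ⟨c, hc⟩ := c
  induction c, (show (b : ℕ) ≤ c from hbc) using Nat.le_induction with
  | base => rfl
  | succ k hbk ih =>
    have hk : k < lam i := by omega
    refine (ih hk hbk fun d hd => hS d ⟨hd.1, hd.2.trans (Nat.le_succ k)⟩).trans
      (Adj.reachable ?_)
    exact completeSunGraph_adj_inr_inr (b := ⟨k, hk⟩) rfl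

theorem completeSunGraph_induce_connected_of_subset_ray {i : Fin n}
    (hS : S ⊆ Set.range fun c : Fin (lam i) => .inr ⟨i, c⟩)
    (hconv : {c : Fin (lam i) | .inr ⟨i, c⟩ ∈ S}.OrdConnected) (hne : S.Nonempty) :
    ((completeSunGraph n lam).induce S).Connected := by
  have hreach : ∀ b c : Fin (lam i), b ≤ c → ∀ (hb : .inr ⟨i, b⟩ ∈ S) (hc : .inr ⟨i, c⟩ ∈ S),
      ((completeSunGraph n lam).induce S).Reachable ⟨_, hb⟩ ⟨_, hc⟩ :=
    fun b c hbc hb hc => completeSunGraph_induce_reachable_ray hbc fun d hd => hconv.out hb hc hd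
  rw [connected_iff]
  refine ⟨?_, hne.to_subtype⟩
  rintro ⟨_, hv⟩ ⟨_, hw⟩
  obtain ⟨b, rfl⟩ := hS hv
  obtain ⟨c, rfl⟩ := hS hw
  obtain hbc | hcb := le_total b c
  · exact hreach b c hbc hv hw
  · exact (hreach c b hcb hw hv).symm

theorem completeSunGraph_induce_connected_of_inl_mem {j : Fin n} (hj : .inl j ∈ S)
    (hinl : ∀ i (c : Fin (lam i)), .inr ⟨i, c⟩ ∈ S → .inl i ∈ S)
    (hlower : ∀ i, IsLowerSet {c : Fin (lam i) | .inr ⟨i, c⟩ ∈ S}) :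
    ((completeSunGraph n lam).induce S).Connected := by
  rw [connected_iff_exists_forall_reachable]
  refine ⟨⟨.inl j, hj⟩, ?_⟩
  rintro ⟨k | ⟨i, c⟩, hv⟩
  · exact completeSunGraph_induce_reachable_inl hj hv
  · let z : Fin (lam i) := ⟨0, c.pos⟩
    have hzc : z ≤ c := Nat.zero_le _
    have hray : ∀ d ∈ Set.Icc z c, .inr ⟨i, d⟩ ∈ S := fun d hd => hlower i hd.2 hv
    have hz : .inr ⟨i, z⟩ ∈ S := hray z ⟨le_rfl, hzc⟩
    have hzi : ((completeSunGraph n lam).induce S).Adj ⟨_, hinl i c hv⟩ ⟨_, hz⟩ :=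
      completeSunGraph_adj_inl_inr rfl
    exact (completeSunGraph_induce_reachable_inl hj (hinl i c hv)).trans
      (hzi.reachable.trans (completeSunGraph_induce_reachable_ray hzc hray))

end CompleteSun

section AttachGraph

variable {n : ℕ} {Vs : Fin n → Type} {H : SimpleGraph (Fin n)} {Gs : ∀ i, SimpleGraph (Vs i)}
  {u : ∀ i, Vs i}

theorem attachGraph_adj_inr_of_notMem_range {i : Fin n} {x : Vs i}
    {w : Fin n ⊕ (i : Fin n) × Vs i} (h : (attachGraph H Gs u).Adj (.inr ⟨i, x⟩) w)
    (hw : w ∉ Set.range fun y : Vs i => .inr ⟨i, y⟩) : w = .inl i ∧ x = u i := by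
  rcases w with j | ⟨j, y⟩
  · simp only [attachGraph, fromRel_adj, ne_eq, reduceCtorEq, not_false_eq_true, false_or,
      true_and] at h
    obtain ⟨rfl, hx⟩ := h
    exact ⟨rfl, hx⟩
  · simp only [attachGraph, fromRel_adj, ne_eq, Sum.inr.injEq, Sigma.mk.injEq, not_and] at h
    have hij : i = j := by
      rcases h.2 with ⟨hij, -⟩ | ⟨hji, -⟩
      exacts [hij, hji.symm]
    subst hij
    exact absurd ⟨y, rfl⟩ hw

theorem mem_of_attachGraph_induce_connected {s : Set (Fin n ⊕ (i : Fin n) × Vs i)}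
    (hs : ((attachGraph H Gs u).induce s).Connected) {i : Fin n} {x : Vs i}
    (hx : .inr ⟨i, x⟩ ∈ s) {w : Fin n ⊕ (i : Fin n) × Vs i} (hw : w ∈ s)
    (hwi : w ∉ Set.range fun y : Vs i => .inr ⟨i, y⟩) :
    .inl i ∈ s ∧ .inr ⟨i, u i⟩ ∈ s := by
  obtain ⟨walk⟩ := hs.preconnected ⟨_, hx⟩ ⟨w, hw⟩
  obtain ⟨d, -, ⟨y, hy⟩, hd⟩ := walk.exists_boundary_dart
    (Subtype.val ⁻¹' Set.range fun y : Vs i => .inr ⟨i, y⟩) ⟨x, rfl⟩ hwi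
  replace hy : (.inr ⟨i, y⟩ : Fin n ⊕ (i : Fin n) × Vs i) = d.fst.1 := hy
  have hadj : (attachGraph H Gs u).Adj (.inr ⟨i, y⟩) d.snd.1 := by
    rw [hy]
    exact d.adj
  obtain ⟨hsnd, rfl⟩ := attachGraph_adj_inr_of_notMem_range hadj hd
  refine ⟨hsnd ▸ d.snd.2, ?_⟩
  rw [hy]
  exact d.fst.2

end AttachGraph

section Relabelling

variable {n : ℕ} {lam : Fin n → ℕ} {Vs : Fin n → Type} [∀ i, Fintype (Vs i)]
  [∀ i, DecidableEq (Vs i)] {H : SimpleGraph (Fin n)} {Gs : ∀ i, SimpleGraph (Vs i)}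
  {u : ∀ i, Vs i}

theorem completeSunGraph_induce_connected_of_attachGraph
    {P : Finpartition (Finset.univ : Finset (Fin n ⊕ (i : Fin n) × Vs i))}
    (e : ∀ i, Vs i ≃ Fin (lam i))
    (hconv : ∀ i p, (((fun x => P.part (.inr ⟨i, x⟩)) ∘ (e i).symm) ⁻¹' {p}).OrdConnected)
    (hlower : ∀ i, IsLowerSet (((fun x => P.part (.inr ⟨i, x⟩)) ∘ (e i).symm) ⁻¹'
      {P.part (.inr ⟨i, u i⟩)}))
    {p : Finset (Fin n ⊕ (i : Fin n) × Vs i)} (hpP : p ∈ P.parts)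
    (hp : ((attachGraph H Gs u).induce p).Connected) :
    ((completeSunGraph n lam).induce
      (p.map (Equiv.sumCongr (Equiv.refl _) (Equiv.sigmaCongrRight e)).toEmbedding)).Connected := by
  set S : Set (Fin n ⊕ (i : Fin n) × Fin (lam i)) :=
    ↑(p.map (Equiv.sumCongr (Equiv.refl _) (Equiv.sigmaCongrRight e)).toEmbedding)
  have hinl (j : Fin n) : Sum.inl j ∈ S ↔ Sum.inl j ∈ p := by
    simp [S]
  have hinr (i : Fin n) (c : Fin (lam i)) :
      Sum.inr ⟨i, c⟩ ∈ S ↔ Sum.inr ⟨i, (e i).symm c⟩ ∈ p := by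
    simp [S, Equiv.sigmaCongrRight_symm]
  have hray (i : Fin n) : {c | Sum.inr ⟨i, c⟩ ∈ S} =
      ((fun x => P.part (.inr ⟨i, x⟩)) ∘ (e i).symm) ⁻¹' {p} := by
    ext c
    exact (hinr i c).trans (P.part_eq_iff_mem hpP).symm
  by_cases hbody : ∃ j, Sum.inl j ∈ p
  · obtain ⟨j, hj⟩ := hbody
    have hgate (i : Fin n) (x : Vs i) (hx : Sum.inr ⟨i, x⟩ ∈ p) :
        Sum.inl i ∈ p ∧ Sum.inr ⟨i, u i⟩ ∈ p :=
      mem_of_attachGraph_induce_connected hp hx hj (by simp)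
    refine completeSunGraph_induce_connected_of_inl_mem ((hinl j).2 hj)
      (fun i c hc => (hinl i).2 (hgate i _ ((hinr i c).1 hc)).1) (fun i => ?_)
    rw [hray i]
    intro a b hba ha
    have hu : P.part (.inr ⟨i, u i⟩) = p :=
      (P.part_eq_iff_mem hpP).2 (hgate i _ ((P.part_eq_iff_mem hpP).1 ha)).2
    exact (hlower i hba (ha.trans hu.symm)).trans hu
  · push Not at hbody
    obtain ⟨j | ⟨i, z⟩, hz⟩ := P.nonempty_of_mem_parts hpP
    · exact absurd hz (hbody j)
    have hsub (w) (hw : w ∈ p) : w ∈ Set.range fun y : Vs i => Sum.inr ⟨i, y⟩ :=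
      by_contra fun hwi => hbody i (mem_of_attachGraph_induce_connected hp hz hw hwi).1
    refine completeSunGraph_induce_connected_of_subset_ray (i := i) ?_ (hray i ▸ hconv i p)
      ⟨_, (hinr i (e i z)).2 (by simpa using hz)⟩
    intro w hw
    obtain ⟨v, hv, rfl⟩ := Finset.mem_map.1 hw
    obtain ⟨y, rfl⟩ := hsub v hv
    exact ⟨e i y, rfl⟩

end Relabelling

theorem completeSun_connectedPartition_of_attach_general (n : ℕ)
    (lam : Fin n → ℕ) (H : SimpleGraph (Fin n))
    (Vs : Fin n → Type) [∀ i, Fintype (Vs i)] [∀ i, DecidableEq (Vs i)]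
    (Gs : ∀ i, SimpleGraph (Vs i))
    (hcard : ∀ i, Fintype.card (Vs i) = lam i)
    (u : ∀ i, Vs i) (μ : Multiset ℕ)
    (h : HasConnectedPartition (attachGraph H Gs u) μ) :
    HasConnectedPartition (completeSunGraph n lam) μ := by
  obtain ⟨P, hPconn, rfl⟩ := h
  choose e hconv hlower using fun i =>
    exists_equiv_fin_ordConnected_fibers (fun x : Vs i => P.part (.inr ⟨i, x⟩)) (u i) (hcard i)
  exact hasConnectedPartition_of_equiv _ P fun p hp =>
    completeSunGraph_induce_connected_of_attachGraph e hconv hlower hp (hPconn p hp)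

/-- If `G` is obtained by joining each vertex `v_i` of an arbitrary connected
graph `H` on vertex set `{v_1, …, v_n}` by an edge to a chosen vertex `u_i` of a connected
graph `G_i` on `λ_i` vertices, and `G` has a connected partition of type `μ`, then so does
the complete sun `S̄(n; λ_1, …, λ_n)`. -/
theorem completeSun_connectedPartition_of_attach (n : ℕ) (hn : 3 ≤ n)
    (lam : Fin n → ℕ) (hpos : ∀ i, 0 < lam i)
    (H : SimpleGraph (Fin n)) (hH : H.Connected)
    (Vs : Fin n → Type) [∀ i, Fintype (Vs i)] [∀ i, DecidableEq (Vs i)]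
    (Gs : ∀ i, SimpleGraph (Vs i)) (hconn : ∀ i, (Gs i).Connected)
    (hcard : ∀ i, Fintype.card (Vs i) = lam i)
    (u : ∀ i, Vs i) (μ : Multiset ℕ)
    (h : HasConnectedPartition (attachGraph H Gs u) μ) :
    HasConnectedPartition (completeSunGraph n lam) μ :=
  completeSun_connectedPartition_of_attach_general n lam H Vs Gs hcard u μ h
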